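/- arXiv:0907.4872 — 2 statements merged into one kernel-verified Lean document; each statement's English description precedes it below -/
import Mathlib

section
/- Let r ∈ int(D_d) be reduced (r_0 ≠ 0, M_r contractive). For each x ∈ ℤ^d, the SRS tile T_r(x) := Lim_{n→∞} M_r^n τ_r^{-n}(x) (Hausdorff limit) exists, is a nonempty compact set, and satisfies the set equation T_r(x) = ⋃_{y ∈ τ_r^{-1}(x)} M_r T_r(y). -/
open Matrix Filter

noncomputable section

/-- Scalar product r·z of a real vector with an integer vector. -/
def srsDot {d : ℕ} (r : Fin d → ℝ) (z : Fin d → ℤ) : ℝ := ∑ i, r i * (z i : ℝ)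

/-- The shift radix map τ_r(z) = (z_1,...,z_{d-1}, -⌊r·z⌋). -/
def srsTau {d : ℕ} (r : Fin d → ℝ) (z : Fin d → ℤ) : Fin d → ℤ :=
  fun i => if h : (i : ℕ) + 1 < d then z ⟨(i : ℕ) + 1, h⟩ else -⌊srsDot r z⌋

/-- The companion matrix M_r of r. -/
def companion {d : ℕ} (r : Fin d → ℝ) : Matrix (Fin d) (Fin d) ℝ :=
  fun i j => if (i : ℕ) + 1 < d then (if (j : ℕ) = (i : ℕ) + 1 then 1 else 0) else -r j

/-- The vector (0,...,0,v)^t. -/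
def digitVec {d : ℕ} (v : ℝ) : Fin d → ℝ := fun i => if (i : ℕ) + 1 = d then v else 0

/-- Coordinatewise cast of an integer vector to a real vector. -/
def intToReal {d : ℕ} (z : Fin d → ℤ) : Fin d → ℝ := fun i => (z i : ℝ)

/-- M_r is contractive (spectral radius < 1). -/
def srsContractive {d : ℕ} (r : Fin d → ℝ) : Prop :=
  ∃ C > (0:ℝ), ∃ ρ : ℝ, 0 ≤ ρ ∧ ρ < 1 ∧
    ∀ (n : ℕ) (x : Fin d → ℝ), ‖((companion r) ^ n).mulVec x‖ ≤ C * ρ ^ n * ‖x‖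

/-- The SRS tile T_r(x), as the set of limit points lim M_r^n z_{-n} with
τ_r^n(z_{-n}) = x. -/
def srsTile {d : ℕ} (r : Fin d → ℝ) (x : Fin d → ℤ) : Set (Fin d → ℝ) :=
  {t | ∃ z : ℕ → (Fin d → ℤ), (∀ n, (srsTau r)^[n] (z n) = x) ∧
    Tendsto (fun n => ((companion r) ^ n).mulVec (intToReal (z n))) atTop (nhds t)}

/-! Since `M_r z = τ_r z - (0, …, 0, {r·z})`, the points `M_r^(n+1) z` and `M_r^n (τ_r z)` differ by
`M_r^n` applied to a vector of norm `< 1`, hence by at most `C ρ^n`. Telescoping, every point of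
`M_r^n τ_r^{-n}(x)` is within `C ρ^n / (1 - ρ)` of the limit of a backward orbit through it, and every
point of `T_r(x)` is within the same distance of `M_r^n τ_r^{-n}(x)`. This gives the Hausdorff
convergence and describes `T_r(x)` as `{t | ∀ n, infDist t (M_r^n τ_r^{-n}(x)) ≤ C ρ^n / (1 - ρ)}`,
a closed bounded set.

Contractivity forces `|r_0| = |det M_r| < 1`, so `τ_r` is onto (backward orbits exist), while
`r_0 ≠ 0` makes `M_r` invertible and the fibres of `τ_r` finite. The inclusion
`T_r(x) ⊆ ⋃ M_r T_r(y)` then comes from pigeonholing the fibre `τ_r^{-1}(x)` along a defining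
sequence of a point of `T_r(x)`. -/

open Metric

theorem tendsto_pow_nhds_zero_of_norm_mulVec_le {n : Type*} [Fintype n] [DecidableEq n]
    {A : Matrix n n ℝ} {C ρ : ℝ} (hρ : 0 ≤ ρ) (hρ1 : ρ < 1)
    (hA : ∀ k v, ‖(A ^ k) *ᵥ v‖ ≤ C * ρ ^ k * ‖v‖) :
    Tendsto (fun k => A ^ k) atTop (nhds 0) := by
  refine tendsto_pi_nhds.2 fun i => tendsto_pi_nhds.2 fun j => squeeze_zero_norm (fun k => ?_)
    (by simpa using (tendsto_pow_atTop_nhds_zero_of_lt_one hρ hρ1).const_mul C)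
  calc ‖(A ^ k) i j‖ = ‖((A ^ k) *ᵥ Pi.single j 1) i‖ := by simp
    _ ≤ ‖(A ^ k) *ᵥ Pi.single j 1‖ := norm_le_pi_norm _ i
    _ ≤ C * ρ ^ k := by simpa [Pi.norm_single] using hA k (Pi.single j 1)

theorem abs_det_lt_one_of_tendsto_pow {n : Type*} [Fintype n] [DecidableEq n] [Nonempty n]
    {A : Matrix n n ℝ} (hA : Tendsto (fun k => A ^ k) atTop (nhds 0)) : |A.det| < 1 := by
  have h := ((continuous_id.matrix_det (n := n) (R := ℝ)).tendsto 0).comp hA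
  simp only [Function.comp_def, id, det_pow, det_zero] at h
  exact tendsto_pow_atTop_nhds_zero_iff.1 h

theorem exists_floor_mul_add_eq {a : ℝ} (ha : a ≠ 0) (ha1 : |a| ≤ 1) (c : ℝ) (w : ℤ) :
    ∃ k : ℤ, ⌊a * k + c⌋ = w := by
  suffices h : ∀ a : ℝ, 0 < a → a ≤ 1 → ∃ k : ℤ, ⌊a * k + c⌋ = w by
    rcases ha.lt_or_gt with hneg | hpos
    · obtain ⟨k, hk⟩ := h (-a) (by linarith) (by linarith [neg_abs_le a])
      exact ⟨-k, by simpa using hk⟩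
    · exact h a hpos ((le_abs_self a).trans ha1)
  intro a ha ha1
  set q := (w - c) / a
  have hq : a * q = w - c := mul_div_cancel₀ _ ha.ne'
  refine ⟨⌈q⌉, Int.floor_eq_iff.2 ⟨?_, ?_⟩⟩
  · nlinarith [Int.le_ceil q]
  · nlinarith [Int.ceil_lt_add_one q]

theorem finite_setOf_floor_mul_add_eq {a : ℝ} (ha : a ≠ 0) (c : ℝ) (w : ℤ) :
    {k : ℤ | ⌊a * k + c⌋ = w}.Finite := by
  set R := (|w - c| + 1) / |a|
  refine (Set.finite_Icc (-⌈R⌉) ⌈R⌉).subset fun k hk => ?_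
  rw [Set.mem_ofPred_eq, Int.floor_eq_iff] at hk
  have hk' : |(k : ℝ)| ≤ R := by
    rw [le_div_iff₀ (abs_pos.2 ha), ← abs_mul, mul_comm]
    have : |a * k - (w - c)| ≤ 1 := abs_le.2 ⟨by linarith, by linarith⟩
    linarith [abs_sub_abs_le_abs_sub (a * k) (w - c)]
  rw [Set.mem_Icc, ← abs_le]
  exact_mod_cast hk'.trans (Int.le_ceil R)

theorem companion_mulVec_intToReal {d : ℕ} (r : Fin d → ℝ) (z : Fin d → ℤ) :
    companion r *ᵥ intToReal z = intToReal (srsTau r z) - digitVec (Int.fract (srsDot r z)) := by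
  funext i
  simp only [Pi.sub_apply, intToReal, srsTau, digitVec, companion, mulVec, dotProduct]
  by_cases h : (i : ℕ) + 1 < d
  · simp only [h, if_true, dif_pos, h.ne, if_false, sub_zero, ite_mul, one_mul, zero_mul]
    rw [Finset.sum_eq_single ⟨i + 1, h⟩] <;> simp +contextual [Fin.ext_iff]
  · simp only [h, if_false, dif_neg, not_false_eq_true, if_pos (by omega : (i : ℕ) + 1 = d),
      neg_mul, Finset.sum_neg_distrib, Int.cast_neg]
    rw [show ∑ j, r j * (z j : ℝ) = srsDot r z from rfl]
    linarith [Int.floor_add_fract (srsDot r z)]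

theorem norm_digitVec_le {d : ℕ} (v : ℝ) : ‖(digitVec v : Fin d → ℝ)‖ ≤ ‖v‖ :=
  (pi_norm_le_iff_of_nonneg (norm_nonneg v)).2 fun i => by
    unfold digitVec; split_ifs <;> simp

theorem companion_apply_zero {m : ℕ} (r : Fin (m + 1) → ℝ) (i : Fin (m + 1)) :
    companion r i 0 = if i = Fin.last m then -r 0 else 0 := by
  by_cases hi : i = Fin.last m
  · simp [companion, hi]
  · have : (i : ℕ) + 1 < m + 1 := by have := Fin.val_lt_last hi; omega
    simp [companion, hi, this]

theorem companion_submatrix_castSucc_succ {m : ℕ} (r : Fin (m + 1) → ℝ) :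
    (companion r).submatrix Fin.castSucc Fin.succ = 1 := by
  ext a b
  simp [companion, Matrix.one_apply, Fin.ext_iff, eq_comm]

theorem det_companion {m : ℕ} (r : Fin (m + 1) → ℝ) :
    (companion r).det = (-1) ^ (m + 1) * r 0 := by
  rw [det_succ_column_zero, Finset.sum_eq_single (Fin.last m)]
  · simp [companion_apply_zero, companion_submatrix_castSucc_succ, pow_succ]
  · intro i _ hi
    simp [companion_apply_zero, hi]
  · simp

section LastCoordinate

variable {m : ℕ} (r : Fin (m + 1) → ℝ)

@[simp]
theorem srsTau_castSucc (z : Fin (m + 1) → ℤ) (i : Fin m) : srsTau r z i.castSucc = z i.succ := by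
  simp [srsTau, Fin.succ]

@[simp]
theorem srsTau_last (z : Fin (m + 1) → ℤ) : srsTau r z (Fin.last m) = -⌊srsDot r z⌋ := by
  simp [srsTau]

theorem srsDot_cons (k : ℤ) (v : Fin m → ℤ) :
    srsDot r (Fin.cons k v) = r 0 * k + ∑ i, r i.succ * v i := by
  simp [srsDot, Fin.sum_univ_succ]

theorem srsTau_eq_iff (y x : Fin (m + 1) → ℤ) :
    srsTau r y = x ↔ Fin.tail y = Fin.init x ∧ ⌊srsDot r y⌋ = -x (Fin.last m) := by
  simp only [funext_iff, Fin.forall_fin_succ', srsTau_castSucc, srsTau_last, Fin.tail, Fin.init]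
  constructor <;> rintro ⟨h, h'⟩ <;> exact ⟨h, by omega⟩

theorem setOf_srsTau_eq (x : Fin (m + 1) → ℤ) :
    {y | srsTau r y = x} = (fun k : ℤ => (Fin.cons k (Fin.init x) : Fin (m + 1) → ℤ)) ''
      {k | ⌊r 0 * k + ∑ i, r i.succ * Fin.init x i⌋ = -x (Fin.last m)} := by
  ext y
  obtain ⟨k, v, rfl⟩ : ∃ k v, y = Fin.cons k v := ⟨y 0, Fin.tail y, (Fin.cons_self_tail y).symm⟩
  simp only [Set.mem_ofPred_eq, Set.mem_image, srsTau_eq_iff, Fin.tail_cons, srsDot_cons,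
    Fin.cons_inj]
  constructor
  · rintro ⟨rfl, h⟩
    exact ⟨k, h, rfl, rfl⟩
  · rintro ⟨k, h, rfl, rfl⟩
    exact ⟨rfl, h⟩

theorem srsTau_surjective (h0 : r 0 ≠ 0) (h1 : |r 0| ≤ 1) : Function.Surjective (srsTau r) :=
  fun x => by
    obtain ⟨k, hk⟩ := exists_floor_mul_add_eq h0 h1 (∑ i, r i.succ * Fin.init x i) (-x (Fin.last m))
    have : Fin.cons k (Fin.init x) ∈ {y | srsTau r y = x} := setOf_srsTau_eq r x ▸ ⟨k, hk, rfl⟩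
    exact ⟨_, this⟩

theorem finite_setOf_srsTau_eq (h0 : r 0 ≠ 0) (x : Fin (m + 1) → ℤ) :
    {y | srsTau r y = x}.Finite := by
  rw [setOf_srsTau_eq]
  exact (finite_setOf_floor_mul_add_eq h0 _ _).image _

end LastCoordinate

section Tile

variable {d : ℕ} {r : Fin d → ℝ}

def srsLevel (r : Fin d → ℝ) (x : Fin d → ℤ) (n : ℕ) : Set (Fin d → ℝ) :=
  (fun z => (companion r ^ n) *ᵥ intToReal z) '' {z | (srsTau r)^[n] z = x}

theorem srsLevel_zero (x : Fin d → ℤ) : srsLevel r x 0 = {intToReal x} := by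
  simp [srsLevel]

theorem srsLevel_nonempty (hτ : Function.Surjective (srsTau r)) (x : Fin d → ℤ) (n : ℕ) :
    (srsLevel r x n).Nonempty :=
  let ⟨z, hz⟩ := hτ.iterate n x
  ⟨_, z, hz, rfl⟩

theorem mem_srsTile_of_infDist_le (hτ : Function.Surjective (srsTau r)) {x : Fin d → ℤ}
    {t : Fin d → ℝ} {ε : ℕ → ℝ} (hε : Tendsto ε atTop (nhds 0))
    (ht : ∀ n, infDist t (srsLevel r x n) ≤ ε n) : t ∈ srsTile r x := by
  have hδ : ∀ n, ∃ z, (srsTau r)^[n] z = x ∧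
      dist t ((companion r ^ n) *ᵥ intToReal z) < ε n + 1 / (n + 1) := by
    intro n
    obtain ⟨_, ⟨z, hz, rfl⟩, hdist⟩ := (infDist_lt_iff (srsLevel_nonempty hτ x n)).1
      ((ht n).trans_lt (lt_add_of_pos_right _ Nat.one_div_pos_of_nat))
    exact ⟨z, hz, hdist⟩
  choose z hz hdist using hδ
  refine ⟨z, hz, tendsto_iff_dist_tendsto_zero.2 ?_⟩
  refine squeeze_zero (fun _ => dist_nonneg) (fun n => (dist_comm _ _).trans_le (hdist n).le) ?_
  simpa using hε.add tendsto_one_div_add_atTop_nhds_zero_nat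

section Contraction

variable {C ρ : ℝ}

theorem dist_companion_pow_succ_le (hC : 0 ≤ C) (hρ : 0 ≤ ρ)
    (hM : ∀ n v, ‖(companion r ^ n) *ᵥ v‖ ≤ C * ρ ^ n * ‖v‖) (n : ℕ) (z : Fin d → ℤ) :
    dist ((companion r ^ (n + 1)) *ᵥ intToReal z) ((companion r ^ n) *ᵥ intToReal (srsTau r z))
      ≤ C * ρ ^ n := by
  rw [pow_succ, ← mulVec_mulVec, companion_mulVec_intToReal, mulVec_sub, dist_eq_norm,
    sub_sub_cancel_left, norm_neg]
  calc _ ≤ C * ρ ^ n * ‖(digitVec (Int.fract (srsDot r z)) : Fin d → ℝ)‖ := hM n _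
    _ ≤ C * ρ ^ n * 1 := by
        gcongr
        refine (norm_digitVec_le _).trans ?_
        rw [Real.norm_of_nonneg (Int.fract_nonneg _)]
        exact (Int.fract_lt_one _).le
    _ = C * ρ ^ n := mul_one _

variable (hC : 0 ≤ C) (hρ : 0 ≤ ρ) (hρ1 : ρ < 1)
  (hM : ∀ n v, ‖(companion r ^ n) *ᵥ v‖ ≤ C * ρ ^ n * ‖v‖)
include hC hρ hρ1 hM

theorem dist_companion_pow_add_le (n k : ℕ) (z : Fin d → ℤ) :
    dist ((companion r ^ (n + k)) *ᵥ intToReal z)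
      ((companion r ^ n) *ᵥ intToReal ((srsTau r)^[k] z)) ≤ C / (1 - ρ) * ρ ^ n := by
  induction k generalizing n with
  | zero => simp only [add_zero, Function.iterate_zero, id, dist_self]; positivity
  | succ k ih =>
    have hstep := dist_companion_pow_succ_le hC hρ hM n ((srsTau r)^[k] z)
    rw [← Function.iterate_succ_apply' (srsTau r)] at hstep
    calc _ ≤ dist ((companion r ^ ((n + 1) + k)) *ᵥ intToReal z)
            ((companion r ^ (n + 1)) *ᵥ intToReal ((srsTau r)^[k] z)) + C * ρ ^ n := by
          rw [show n + (k + 1) = (n + 1) + k by omega]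
          exact (dist_triangle _ _ _).trans (add_le_add le_rfl hstep)
      _ ≤ C / (1 - ρ) * ρ ^ (n + 1) + C * ρ ^ n := add_le_add (ih (n + 1)) le_rfl
      _ = C / (1 - ρ) * ρ ^ n := by
          field_simp [(sub_pos.2 hρ1).ne']
          ring

theorem infDist_srsLevel_le_of_tendsto {ι : Type*} {l : Filter ι} [l.NeBot] {n : ι → ℕ}
    {z : ι → Fin d → ℤ} {x : Fin d → ℤ} {t : Fin d → ℝ} (hn : Tendsto n l atTop)
    (hz : ∀ᶠ i in l, (srsTau r)^[n i] (z i) = x)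
    (ht : Tendsto (fun i => (companion r ^ n i) *ᵥ intToReal (z i)) l (nhds t)) (m : ℕ) :
    infDist t (srsLevel r x m) ≤ C / (1 - ρ) * ρ ^ m := by
  have hbound : ∀ᶠ i in l, infDist t (srsLevel r x m) ≤
      dist t ((companion r ^ n i) *ᵥ intToReal (z i)) + C / (1 - ρ) * ρ ^ m := by
    filter_upwards [hz, hn.eventually_ge_atTop m] with i hzi hmi
    obtain ⟨k, hk⟩ := Nat.exists_eq_add_of_le hmi
    have hmem : (companion r ^ m) *ᵥ intToReal ((srsTau r)^[k] (z i)) ∈ srsLevel r x m :=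
      ⟨_, by rw [Set.mem_ofPred_eq, ← Function.iterate_add_apply, ← hk, hzi], rfl⟩
    refine (infDist_le_dist_of_mem hmem).trans
      ((dist_triangle _ ((companion r ^ n i) *ᵥ intToReal (z i)) _).trans (add_le_add le_rfl ?_))
    rw [hk]
    exact dist_companion_pow_add_le hC hρ hρ1 hM m k (z i)
  refine ge_of_tendsto ?_ hbound
  simpa using ((tendsto_const_nhds (x := t)).dist ht).add_const (C / (1 - ρ) * ρ ^ m)

theorem mem_srsTile_iff_s6 (hτ : Function.Surjective (srsTau r)) {x : Fin d → ℤ} {t : Fin d → ℝ} :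
    t ∈ srsTile r x ↔ ∀ n, infDist t (srsLevel r x n) ≤ C / (1 - ρ) * ρ ^ n :=
  ⟨fun ⟨_, hz, ht⟩ => infDist_srsLevel_le_of_tendsto hC hρ hρ1 hM tendsto_id (.of_forall hz) ht,
    mem_srsTile_of_infDist_le hτ
      (by simpa using (tendsto_pow_atTop_nhds_zero_of_lt_one hρ hρ1).const_mul (C / (1 - ρ)))⟩

theorem mem_srsTile_of_tendsto (hτ : Function.Surjective (srsTau r)) {ι : Type*} {l : Filter ι}
    [l.NeBot] {n : ι → ℕ} {z : ι → Fin d → ℤ} {x : Fin d → ℤ} {t : Fin d → ℝ}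
    (hn : Tendsto n l atTop) (hz : ∀ᶠ i in l, (srsTau r)^[n i] (z i) = x)
    (ht : Tendsto (fun i => (companion r ^ n i) *ᵥ intToReal (z i)) l (nhds t)) :
    t ∈ srsTile r x :=
  (mem_srsTile_iff_s6 hC hρ hρ1 hM hτ).2 (infDist_srsLevel_le_of_tendsto hC hρ hρ1 hM hn hz ht)

theorem isClosed_srsTile (hτ : Function.Surjective (srsTau r)) (x : Fin d → ℤ) :
    IsClosed (srsTile r x) := by
  have : srsTile r x = ⋂ n, {t | infDist t (srsLevel r x n) ≤ C / (1 - ρ) * ρ ^ n} := by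
    ext t
    simp [mem_srsTile_iff_s6 hC hρ hρ1 hM hτ]
  rw [this]
  exact isClosed_iInter fun n => isClosed_le (continuous_infDist_pt _) continuous_const

theorem srsTile_subset_closedBall (x : Fin d → ℤ) :
    srsTile r x ⊆ closedBall (intToReal x) (C / (1 - ρ)) := fun _ ⟨_, hz, ht⟩ => by
  simpa [srsLevel_zero, infDist_singleton] using
    infDist_srsLevel_le_of_tendsto hC hρ hρ1 hM tendsto_id (.of_forall hz) ht 0

theorem isCompact_srsTile (hτ : Function.Surjective (srsTau r)) (x : Fin d → ℤ) :
    IsCompact (srsTile r x) :=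
  isCompact_of_isClosed_isBounded (isClosed_srsTile hC hρ hρ1 hM hτ x)
    (isBounded_closedBall.subset (srsTile_subset_closedBall hC hρ hρ1 hM x))

theorem exists_mem_srsTile_dist_le (hτ : Function.Surjective (srsTau r)) {x z : Fin d → ℤ}
    {n : ℕ} (hz : (srsTau r)^[n] z = x) :
    ∃ t ∈ srsTile r x, dist ((companion r ^ n) *ᵥ intToReal z) t ≤ C / (1 - ρ) * ρ ^ n := by
  set pre := Function.surjInv hτ
  have hpre : Function.LeftInverse (srsTau r) pre := Function.rightInverse_surjInv hτ
  set a : ℕ → Fin d → ℝ := fun j => (companion r ^ (n + j)) *ᵥ intToReal (pre^[j] z)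
  have hstep : ∀ j, dist (a j) (a (j + 1)) ≤ C * ρ ^ n * ρ ^ j := by
    intro j
    have hτpre : srsTau r (pre^[j + 1] z) = pre^[j] z := by rw [Function.iterate_succ_apply', hpre]
    have := dist_companion_pow_succ_le hC hρ hM (n + j) (pre^[j + 1] z)
    rw [hτpre] at this
    rw [dist_comm, mul_assoc, ← pow_add]
    exact this
  obtain ⟨t, ht⟩ := cauchySeq_tendsto_of_complete (cauchySeq_of_le_geometric ρ _ hρ1 hstep)
  refine ⟨t, mem_srsTile_of_tendsto hC hρ hρ1 hM hτ (n := fun j => n + j)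
    (tendsto_atTop_mono (Nat.le_add_left · n) tendsto_id) (.of_forall fun j => ?_) ht, ?_⟩
  · rw [Function.iterate_add_apply, hpre.iterate j, hz]
  · calc dist (a 0) t ≤ C * ρ ^ n / (1 - ρ) := dist_le_of_le_geometric_of_tendsto₀ ρ _ hρ1 hstep ht
      _ = C / (1 - ρ) * ρ ^ n := by ring

theorem srsTile_nonempty (hτ : Function.Surjective (srsTau r)) (x : Fin d → ℤ) :
    (srsTile r x).Nonempty :=
  let ⟨t, ht, _⟩ := exists_mem_srsTile_dist_le hC hρ hρ1 hM hτ (n := 0) (z := x) rfl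
  ⟨t, ht⟩

theorem hausdorffDist_srsLevel_srsTile_le (hτ : Function.Surjective (srsTau r)) (x : Fin d → ℤ)
    (n : ℕ) : hausdorffDist (srsLevel r x n) (srsTile r x) ≤ C / (1 - ρ) * ρ ^ n := by
  refine hausdorffDist_le_of_infDist
    (mul_nonneg (div_nonneg hC (sub_nonneg.2 hρ1.le)) (pow_nonneg hρ n)) ?_
    fun t ht => (mem_srsTile_iff_s6 hC hρ hρ1 hM hτ).1 ht n
  rintro _ ⟨z, hz, rfl⟩
  obtain ⟨t, ht, hdist⟩ := exists_mem_srsTile_dist_le hC hρ hρ1 hM hτ hz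
  exact (infDist_le_dist_of_mem ht).trans hdist

theorem tendsto_hausdorffDist_srsLevel_srsTile (hτ : Function.Surjective (srsTau r))
    (x : Fin d → ℤ) :
    Tendsto (fun n => hausdorffDist (srsLevel r x n) (srsTile r x)) atTop (nhds 0) :=
  squeeze_zero (fun _ => hausdorffDist_nonneg) (hausdorffDist_srsLevel_srsTile_le hC hρ hρ1 hM hτ x)
    (by simpa using (tendsto_pow_atTop_nhds_zero_of_lt_one hρ hρ1).const_mul (C / (1 - ρ)))

theorem companion_mulVec_mem_srsTile (hτ : Function.Surjective (srsTau r)) {x y : Fin d → ℤ}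
    (hy : srsTau r y = x) {s : Fin d → ℝ} (hs : s ∈ srsTile r y) :
    companion r *ᵥ s ∈ srsTile r x := by
  obtain ⟨z, hz, hlim⟩ := hs
  refine mem_srsTile_of_tendsto hC hρ hρ1 hM hτ (n := fun k => k + 1) (tendsto_add_atTop_nat 1)
    (.of_forall fun k => by rw [Function.iterate_succ_apply', hz, hy]) ?_
  simp_rw [pow_succ', ← mulVec_mulVec]
  exact ((continuous_const.matrix_mulVec continuous_id).tendsto s).comp hlim

theorem exists_inv_mulVec_mem_srsTile (hτ : Function.Surjective (srsTau r))
    (hfin : ∀ x, {y | srsTau r y = x}.Finite) (hdet : IsUnit (companion r).det)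
    {x : Fin d → ℤ} {t : Fin d → ℝ} (ht : t ∈ srsTile r x) :
    ∃ y, srsTau r y = x ∧ (companion r)⁻¹ *ᵥ t ∈ srsTile r y := by
  obtain ⟨z, hz, hlim⟩ := ht
  obtain ⟨y, hy, hfreq⟩ := (frequently_exists_finite (hfin x) (l := atTop)
    (p := fun y n => (srsTau r)^[n] (z (n + 1)) = y)).1 <| .of_forall fun n =>
      ⟨(srsTau r)^[n] (z (n + 1)), by
        rw [Set.mem_ofPred_eq, ← Function.iterate_succ_apply' (srsTau r), hz], rfl⟩
  have := frequently_iff_neBot.1 hfreq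
  have hinv : ∀ n v, (companion r ^ n) *ᵥ v = (companion r)⁻¹ *ᵥ ((companion r ^ (n + 1)) *ᵥ v) :=
    fun n v => by rw [mulVec_mulVec, pow_succ', ← mul_assoc, nonsing_inv_mul _ hdet, one_mul]
  refine ⟨y, hy, mem_srsTile_of_tendsto hC hρ hρ1 hM hτ (n := id) (z := fun n => z (n + 1))
    (l := atTop ⊓ 𝓟 {n | (srsTau r)^[n] (z (n + 1)) = y})
    (tendsto_id.mono_left inf_le_left) (eventually_inf_principal.2 (.of_forall fun _ h => h)) ?_⟩
  refine Tendsto.congr (fun n => (hinv n _).symm) ?_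
  exact (((continuous_const.matrix_mulVec continuous_id).tendsto t).comp
    (hlim.comp (tendsto_add_atTop_nat 1))).mono_left inf_le_left

theorem srsTile_eq_iUnion (hτ : Function.Surjective (srsTau r))
    (hfin : ∀ x, {y | srsTau r y = x}.Finite) (hdet : IsUnit (companion r).det) (x : Fin d → ℤ) :
    srsTile r x = ⋃ y ∈ {y | srsTau r y = x}, (companion r).mulVec '' srsTile r y := by
  ext t
  simp only [Set.mem_iUnion, Set.mem_image, exists_prop, Set.mem_ofPred_eq]
  constructor
  · intro ht
    obtain ⟨y, hy, hs⟩ := exists_inv_mulVec_mem_srsTile hC hρ hρ1 hM hτ hfin hdet ht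
    exact ⟨y, hy, _, hs, by rw [mulVec_mulVec, mul_nonsing_inv _ hdet, one_mulVec]⟩
  · rintro ⟨y, hy, s, hs, rfl⟩
    exact companion_mulVec_mem_srsTile hC hρ hρ1 hM hτ hy hs

end Contraction

end Tile

/-- the SRS tile T_r(x) is the Hausdorff limit of M_r^n τ_r^{-n}(x);
it is a nonempty compact set satisfying T_r(x) = ⋃_{y ∈ τ_r^{-1}(x)} M_r T_r(y). -/
theorem srsTile_basic_properties (d : ℕ) (hd : 0 < d) (r : Fin d → ℝ)
    (hr0 : r ⟨0, hd⟩ ≠ 0) (hcontr : srsContractive r) (x : Fin d → ℤ) :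
    (srsTile r x).Nonempty ∧ IsCompact (srsTile r x) ∧
    Tendsto (fun n : ℕ => Metric.hausdorffDist
        ((fun z => ((companion r) ^ n).mulVec (intToReal z)) ''
          {z : Fin d → ℤ | (srsTau r)^[n] z = x})
        (srsTile r x)) atTop (nhds 0) ∧
    srsTile r x =
      ⋃ y ∈ {y : Fin d → ℤ | srsTau r y = x}, (companion r).mulVec '' srsTile r y := by
  obtain ⟨C, hC, ρ, hρ, hρ1, hM⟩ := hcontr
  obtain ⟨m, rfl⟩ : ∃ m, d = m + 1 := ⟨d - 1, by omega⟩
  have habs : |r 0| < 1 := by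
    simpa [det_companion, abs_mul] using
      abs_det_lt_one_of_tendsto_pow (tendsto_pow_nhds_zero_of_norm_mulVec_le hρ hρ1 hM)
  have hτ := srsTau_surjective r hr0 habs.le
  have hdet : IsUnit (companion r).det := by simpa [det_companion] using hr0
  exact ⟨srsTile_nonempty hC.le hρ hρ1 hM hτ x, isCompact_srsTile hC.le hρ hρ1 hM hτ x,
    tendsto_hausdorffDist_srsLevel_srsTile hC.le hρ hρ1 hM hτ x,
    srsTile_eq_iUnion hC.le hρ hρ1 hM hτ (finite_setOf_srsTau_eq r hr0) hdet x⟩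
end
end

section
/- Let r ∈ int(D_d) be reduced. A point t ∈ ℝ^d belongs to the SRS tile T_r(x) if and only if there exist numbers v_{-j} ∈ [0,1) for j ∈ ℕ such that t = x - Σ_{j=0}^∞ M_r^j (0,...,0,v_{-j})^t and M_r^{-n}(x - Σ_{j=0}^{n-1} M_r^j (0,...,0,v_{-j})^t) ∈ ℤ^d for all n ∈ ℕ. -/
/-!
A point of `T_r(x)` is a limit of `M_r^n z_n` along a backward `τ_r`-orbit `z_0 = x`,
`τ_r(z_{n+1}) = z_n`: since `r_0 ≠ 0` the fibres of `τ_r` are finite, so König's lemma extracts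
such an orbit from the sequences defining the tile, and contractivity of `M_r` keeps the limit.
Along a backward orbit the identity `τ_r(z) = M_r z + (0,…,0,{r·z})` telescopes to
`M_r^n z_n = x - Σ_{j<n} M_r^j (0,…,0,v_{-j})` with `v_{-j} = {r·z_{j+1}}`. Conversely, for
digits in `[0,1)` satisfying the integrality condition, the integer vectors
`z_n = M_r^{-n}(x - Σ_{j<n} …)` form a backward orbit, because a number in `[0,1)` that differs
from `r·z` by an integer is its fractional part.
-/

open Matrix Filter

noncomputable section

open Topology

theorem Matrix.inv_pow_mulVec_eq_iff {ι K : Type*} [Fintype ι] [DecidableEq ι] [Field K]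
    {A : Matrix ι ι K} (hA : IsUnit A) (k : ℕ) {u w : ι → K} :
    (A⁻¹ ^ k) *ᵥ u = w ↔ (A ^ k) *ᵥ w = u := by
  have hdet : IsUnit (A ^ k).det := (isUnit_iff_isUnit_det _).1 (hA.pow k)
  rw [inv_pow']
  constructor
  · rintro rfl
    rw [mulVec_mulVec, mul_nonsing_inv _ hdet, one_mulVec]
  · rintro rfl
    rw [mulVec_mulVec, nonsing_inv_mul _ hdet, one_mulVec]

section Companion

variable {d : ℕ} (r : Fin d → ℝ)

theorem intToReal_injective : Function.Injective (intToReal : (Fin d → ℤ) → Fin d → ℝ) :=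
  fun _ _ h => funext fun i => Int.cast_injective (congrFun h i)

theorem finite_preimage_intToReal {K : Set (Fin d → ℝ)} (hK : IsCompact K) :
    (intToReal ⁻¹' K).Finite :=
  ((IsClosedEmbedding.piMap fun _ => Int.isClosedEmbedding_coe_real).isCompact_preimage hK
    ).finite_of_discrete

theorem continuous_digitVec : Continuous (digitVec : ℝ → Fin d → ℝ) :=
  continuous_pi fun i => by unfold digitVec; split_ifs <;> fun_prop

theorem norm_digitVec_le_one {v : ℝ} (hv : v ∈ Set.Ico (0 : ℝ) 1) :
    ‖(digitVec v : Fin d → ℝ)‖ ≤ 1 := by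
  refine (pi_norm_le_iff_of_nonneg zero_le_one).2 fun i => ?_
  unfold digitVec
  split_ifs
  · rw [Real.norm_eq_abs, abs_of_nonneg hv.1]
    exact hv.2.le
  · simp

theorem companion_mulVec_apply (u : Fin d → ℝ) (i : Fin d) :
    (companion r *ᵥ u) i =
      if h : (i : ℕ) + 1 < d then u ⟨i + 1, h⟩ else -∑ j, r j * u j := by
  unfold companion
  split_ifs with h
  · simp only [mulVec, dotProduct, if_pos h, ite_mul, one_mul, zero_mul]
    rw [Finset.sum_eq_single_of_mem (⟨i + 1, h⟩ : Fin d) (Finset.mem_univ _)]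
    · simp
    · intro j _ hj
      rw [if_neg fun h' => hj (Fin.ext h')]
  · simp [mulVec, dotProduct, h]

theorem intToReal_srsTau (z : Fin d → ℤ) :
    intToReal (srsTau r z) =
      companion r *ᵥ intToReal z + digitVec (Int.fract (srsDot r z)) := by
  funext i
  simp only [Pi.add_apply, companion_mulVec_apply, intToReal, srsTau, digitVec]
  split_ifs with h h'
  · omega
  · simp
  · rw [Int.fract]
    simp only [srsDot]
    push_cast
    ring
  · omega

theorem srsTau_eq_of_mulVec_eq {z w : Fin d → ℤ} {v : ℝ} (hv : v ∈ Set.Ico (0 : ℝ) 1)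
    (h : companion r *ᵥ intToReal z = intToReal w - digitVec v) : srsTau r z = w := by
  apply intToReal_injective
  suffices digitVec (Int.fract (srsDot r z)) = (digitVec v : Fin d → ℝ) by
    rw [intToReal_srsTau, h, this, sub_add_cancel]
  funext i
  unfold digitVec
  split_ifs with hi
  · have hlast := congrFun h i
    rw [companion_mulVec_apply, dif_neg (by omega)] at hlast
    have hdot : srsDot r z = v - w i := by
      simp only [Pi.sub_apply, digitVec, if_pos hi, intToReal] at hlast
      simp only [srsDot]
      linarith
    rw [hdot, Int.fract_sub_intCast, Int.fract_eq_self.2 hv]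
  · rfl

end Companion

section Invertible

variable {m : ℕ} (r : Fin (m + 1) → ℝ)

theorem companion_mulVec_injective (hr0 : r 0 ≠ 0) :
    Function.Injective (companion r *ᵥ ·) := by
  intro u u' h
  have hsucc (k : Fin m) : u k.succ = u' k.succ := by
    have hk := congrFun h k.castSucc
    simp only [companion_mulVec_apply, Fin.val_castSucc, Nat.add_lt_add_iff_right, k.isLt,
      dif_pos] at hk
    exact hk
  have h0 : u 0 = u' 0 := by
    have hlast := congrFun h (Fin.last m)
    simp only [companion_mulVec_apply, Fin.val_last, lt_irrefl, dif_neg, not_false_eq_true,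
      neg_inj, Fin.sum_univ_succ, hsucc, add_left_inj] at hlast
    exact mul_left_cancel₀ hr0 hlast
  funext i
  induction i using Fin.cases with
  | zero => exact h0
  | succ k => exact hsucc k

theorem isUnit_companion (hr0 : r 0 ≠ 0) : IsUnit (companion r) :=
  mulVec_injective_iff_isUnit.1 (companion_mulVec_injective r hr0)

theorem finite_srsTau_preimage (hr0 : r 0 ≠ 0) (w : Fin (m + 1) → ℤ) :
    (srsTau r ⁻¹' {w}).Finite := by
  let K := (fun v => (companion r)⁻¹ *ᵥ (intToReal w - digitVec v)) '' Set.Icc (0 : ℝ) 1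
  have hK : IsCompact K :=
    isCompact_Icc.image (by have := continuous_digitVec (d := m + 1); fun_prop)
  refine (finite_preimage_intToReal hK).subset fun z hz => ?_
  refine ⟨Int.fract (srsDot r z), ⟨Int.fract_nonneg _, (Int.fract_lt_one _).le⟩, ?_⟩
  have hMz :
      companion r ^ 1 *ᵥ intToReal z = intToReal w - digitVec (Int.fract (srsDot r z)) := by
    rw [pow_one, ← hz, intToReal_srsTau, add_sub_cancel_right]
  simpa using (Matrix.inv_pow_mulVec_eq_iff (isUnit_companion r hr0) 1).2 hMz

end Invertible

section Expansion

variable {d : ℕ} (r : Fin d → ℝ)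

def srsDigitSum (v : ℕ → ℝ) (n : ℕ) : Fin d → ℝ :=
  ∑ j ∈ Finset.range n, companion r ^ j *ᵥ digitVec (v j)

theorem srsDigitSum_succ (v : ℕ → ℝ) (n : ℕ) :
    srsDigitSum r v (n + 1) = srsDigitSum r v n + companion r ^ n *ᵥ digitVec (v n) :=
  Finset.sum_range_succ _ _

theorem intToReal_eq_of_srsTau_chain (c : ℕ → Fin d → ℤ) (n : ℕ)
    (hc : ∀ j < n, srsTau r (c (j + 1)) = c j) :
    intToReal (c 0) = companion r ^ n *ᵥ intToReal (c n) +
      srsDigitSum r (fun j => Int.fract (srsDot r (c (j + 1)))) n := by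
  induction n with
  | zero => simp [srsDigitSum]
  | succ n ih =>
    rw [ih fun j hj => hc j (by omega), ← hc n n.lt_succ_self, intToReal_srsTau, mulVec_add,
      mulVec_mulVec, ← pow_succ, srsDigitSum_succ]
    abel

theorem exists_intToReal_iterate_srsTau (k : ℕ) (z : Fin d → ℤ) :
    ∃ e : ℕ → ℝ, (∀ j, e j ∈ Set.Ico (0 : ℝ) 1) ∧ intToReal ((srsTau r)^[k] z) =
      companion r ^ k *ᵥ intToReal z + srsDigitSum r e k := by
  have hchain : ∀ j < k, srsTau r ((srsTau r)^[k - (j + 1)] z) = (srsTau r)^[k - j] z :=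
    fun j hj => by
      rw [← Function.iterate_succ_apply' (srsTau r), Nat.succ_eq_add_one]
      congr 2
      omega
  refine ⟨fun j => Int.fract (srsDot r ((srsTau r)^[k - (j + 1)] z)),
    fun j => ⟨Int.fract_nonneg _, Int.fract_lt_one _⟩, ?_⟩
  simpa using intToReal_eq_of_srsTau_chain r (fun j => (srsTau r)^[k - j] z) k hchain

end Expansion

namespace srsContractive

variable {d : ℕ} {r : Fin d → ℝ} (hcontr : srsContractive r)
include hcontr

theorem summable_pow_mulVec_digitVec {v : ℕ → ℝ} (hv : ∀ j, v j ∈ Set.Ico (0 : ℝ) 1) :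
    Summable fun j => companion r ^ j *ᵥ digitVec (v j) := by
  obtain ⟨C, hC, ρ, hρ0, hρ1, hbound⟩ := hcontr
  refine .of_norm_bounded ((summable_geometric_of_lt_one hρ0 hρ1).mul_left C) fun j => ?_
  calc _ ≤ C * ρ ^ j * ‖(digitVec (v j) : Fin d → ℝ)‖ := hbound j _
    _ ≤ C * ρ ^ j := mul_le_of_le_one_right (by positivity) (norm_digitVec_le_one (hv j))

theorem tendsto_srsDigitSum {v : ℕ → ℝ} (hv : ∀ j, v j ∈ Set.Ico (0 : ℝ) 1) :
    Tendsto (srsDigitSum r v) atTop (𝓝 (∑' j, companion r ^ j *ᵥ digitVec (v j))) :=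
  (hcontr.summable_pow_mulVec_digitVec hv).hasSum.tendsto_sum_nat

theorem exists_bound_pow_mulVec_srsDigitSum :
    ∃ δ : ℕ → ℝ, Tendsto δ atTop (𝓝 0) ∧ ∀ v : ℕ → ℝ, (∀ j, v j ∈ Set.Ico (0 : ℝ) 1) →
      ∀ n k, ‖companion r ^ n *ᵥ srsDigitSum r v k‖ ≤ δ n := by
  obtain ⟨C, hC, ρ, hρ0, hρ1, hbound⟩ := hcontr
  have hdigit : ∀ v : ℕ → ℝ, (∀ j, v j ∈ Set.Ico (0 : ℝ) 1) → ∀ k,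
      ‖srsDigitSum r v k‖ ≤ ∑' j, C * ρ ^ j := fun v hv k => calc
    _ ≤ ∑ j ∈ Finset.range k, ‖companion r ^ j *ᵥ digitVec (v j)‖ := norm_sum_le _ _
    _ ≤ ∑ j ∈ Finset.range k, C * ρ ^ j := Finset.sum_le_sum fun j _ =>
      (hbound j _).trans (mul_le_of_le_one_right (by positivity) (norm_digitVec_le_one (hv j)))
    _ ≤ ∑' j, C * ρ ^ j :=
      ((summable_geometric_of_lt_one hρ0 hρ1).mul_left C).sum_le_tsum _ fun j _ => by positivity
  refine ⟨fun n => C * ρ ^ n * ∑' j, C * ρ ^ j, ?_, fun v hv n k => ?_⟩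
  · simpa using ((tendsto_pow_atTop_nhds_zero_of_lt_one hρ0 hρ1).const_mul C).mul_const _
  · exact (hbound n _).trans (mul_le_mul_of_nonneg_left (hdigit v hv k) (by positivity))

end srsContractive

theorem exists_backward_orbit {α : Type*} (f : α → α) (hf : ∀ w, (f ⁻¹' {w}).Finite) {x : α}
    {z : ℕ → α} (hz : ∀ n, f^[n] (z n) = x) :
    ∃ c : ℕ → α, c 0 = x ∧ (∀ n, f (c (n + 1)) = c n) ∧
      ∀ n, ∃ᶠ k in atTop, f^[k] (z (k + n)) = c n := by
  let P : ℕ → α → Prop := fun n w => ∃ᶠ k in atTop, f^[k] (z (k + n)) = w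
  -- König's lemma: some preimage of a frequently visited point is itself frequently visited.
  have hstep : ∀ n w, P n w → ∃ w', f w' = w ∧ P (n + 1) w' := fun n w hw => by
    have hshift : ∃ᶠ k in atTop, ∃ w' ∈ f ⁻¹' {w}, f^[k] (z (k + (n + 1))) = w' := by
      have hw' : ∃ᶠ k in map (· + 1) atTop, f^[k] (z (k + n)) = w := by
        rwa [map_add_atTop_eq_nat]
      refine (frequently_map.1 hw').mono fun k hk => ⟨_, ?_, rfl⟩
      rw [Set.mem_preimage, Set.mem_singleton_iff, ← Function.iterate_succ_apply' f, ← hk]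
      congr 2
      omega
    exact ((hf w).frequently_exists.1 hshift).imp fun w' hw' => hw'
  choose g hgf hgP using hstep
  let c : ∀ n, {w // P n w} :=
    fun n => Nat.rec ⟨x, .of_forall fun k => hz k⟩ (fun n w => ⟨g n w.1 w.2, hgP n w.1 w.2⟩) n
  exact ⟨fun n => (c n).1, rfl, fun n => hgf n _ (c n).2, fun n => (c n).2⟩

theorem srsContractive.tendsto_of_frequently_iterate_eq {d : ℕ} {r : Fin d → ℝ}
    (hcontr : srsContractive r) {z c : ℕ → Fin d → ℤ} {t : Fin d → ℝ}
    (hz : Tendsto (fun n => companion r ^ n *ᵥ intToReal (z n)) atTop (𝓝 t))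
    (hc : ∀ n, ∃ᶠ k in atTop, (srsTau r)^[k] (z (k + n)) = c n) :
    Tendsto (fun n => companion r ^ n *ᵥ intToReal (c n)) atTop (𝓝 t) := by
  obtain ⟨δ, hδ, hbound⟩ := hcontr.exists_bound_pow_mulVec_srsDigitSum
  refine tendsto_iff_norm_sub_tendsto_zero.2 (squeeze_zero_norm (fun n => ?_) hδ)
  refine le_of_forall_pos_le_add fun ε hε => ?_
  obtain ⟨N, hN⟩ := Metric.tendsto_atTop.1 hz ε hε
  obtain ⟨k, hkN, hk⟩ := frequently_atTop.1 (hc n) N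
  obtain ⟨e, he, hexp⟩ := exists_intToReal_iterate_srsTau r k (z (k + n))
  have hsplit : companion r ^ n *ᵥ intToReal (c n) - t =
      (companion r ^ (k + n) *ᵥ intToReal (z (k + n)) - t) +
        companion r ^ n *ᵥ srsDigitSum r e k := by
    rw [← hk, hexp, mulVec_add, mulVec_mulVec, ← pow_add, add_comm n k]
    abel
  rw [norm_norm, hsplit, add_comm (δ n)]
  have hfar : ‖companion r ^ (k + n) *ᵥ intToReal (z (k + n)) - t‖ ≤ ε := by
    simpa [dist_eq_norm] using (hN (k + n) (by omega)).le
  exact norm_add_le_of_le hfar (hbound e he n k)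

theorem mem_srsTile_iff_exists_backward_orbit {m : ℕ} {r : Fin (m + 1) → ℝ} (hr0 : r 0 ≠ 0)
    (hcontr : srsContractive r) {x : Fin (m + 1) → ℤ} {t : Fin (m + 1) → ℝ} :
    t ∈ srsTile r x ↔
      ∃ c : ℕ → Fin (m + 1) → ℤ, c 0 = x ∧ (∀ n, srsTau r (c (n + 1)) = c n) ∧
        Tendsto (fun n => companion r ^ n *ᵥ intToReal (c n)) atTop (𝓝 t) := by
  constructor
  · rintro ⟨z, hz, hlim⟩
    obtain ⟨c, hc0, hchain, hfreq⟩ := exists_backward_orbit _ (finite_srsTau_preimage r hr0) hz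
    exact ⟨c, hc0, hchain, hcontr.tendsto_of_frequently_iterate_eq hlim hfreq⟩
  · rintro ⟨c, rfl, hchain, hlim⟩
    refine ⟨c, fun n => ?_, hlim⟩
    induction n with
    | zero => rfl
    | succ n ih => rw [Function.iterate_succ_apply, hchain, ih]

theorem srsTau_eq_of_pow_mulVec_eq {m : ℕ} {r : Fin (m + 1) → ℝ} (hr0 : r 0 ≠ 0)
    {v : ℕ → ℝ} (hv : ∀ j, v j ∈ Set.Ico (0 : ℝ) 1) {y : Fin (m + 1) → ℝ}
    {w : ℕ → Fin (m + 1) → ℤ}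
    (hw : ∀ n, companion r ^ n *ᵥ intToReal (w n) = y - srsDigitSum r v n) (n : ℕ) :
    srsTau r (w (n + 1)) = w n := by
  refine srsTau_eq_of_mulVec_eq r (hv n) (mulVec_injective_iff_isUnit.2
    ((isUnit_companion r hr0).pow n) ?_)
  rw [mulVec_mulVec, ← pow_succ, hw, srsDigitSum_succ, mulVec_sub, hw]
  abel

/-- t ∈ T_r(x) iff there are v_{-j} ∈ [0,1) with
t = x - Σ_{j≥0} M_r^j (0,…,0,v_{-j})^t and
M_r^{-n}(x - Σ_{j<n} M_r^j (0,…,0,v_{-j})^t) ∈ ℤ^d for all n. -/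
theorem mem_srsTile_iff (d : ℕ) (hd : 0 < d) (r : Fin d → ℝ)
    (hr0 : r ⟨0, hd⟩ ≠ 0) (hcontr : srsContractive r)
    (x : Fin d → ℤ) (t : Fin d → ℝ) :
    t ∈ srsTile r x ↔
      ∃ v : ℕ → ℝ, (∀ j, v j ∈ Set.Ico (0:ℝ) 1) ∧
        t = intToReal x - ∑' j : ℕ, ((companion r) ^ j).mulVec (digitVec (v j)) ∧
        ∀ n : ℕ, ∃ w : Fin d → ℤ, intToReal w =
          (((companion r)⁻¹) ^ n).mulVec
            (intToReal x -
              ∑ j ∈ Finset.range n, ((companion r) ^ j).mulVec (digitVec (v j))) := by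
  obtain ⟨m, rfl⟩ : ∃ m, d = m + 1 := ⟨d - 1, by omega⟩
  replace hr0 : r 0 ≠ 0 := hr0
  have hM := isUnit_companion r hr0
  rw [mem_srsTile_iff_exists_backward_orbit hr0 hcontr]
  constructor
  · rintro ⟨c, rfl, hchain, hlim⟩
    set v := fun j => Int.fract (srsDot r (c (j + 1)))
    have hv : ∀ j, v j ∈ Set.Ico (0 : ℝ) 1 := fun j => ⟨Int.fract_nonneg _, Int.fract_lt_one _⟩
    have hc n : companion r ^ n *ᵥ intToReal (c n) = intToReal (c 0) - srsDigitSum r v n :=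
      eq_sub_of_add_eq (intToReal_eq_of_srsTau_chain r c n fun j _ => hchain j).symm
    refine ⟨v, hv, tendsto_nhds_unique hlim ?_,
      fun n => ⟨c n, ((inv_pow_mulVec_eq_iff hM n).2 (hc n)).symm⟩⟩
    simpa only [hc] using tendsto_const_nhds.sub (hcontr.tendsto_srsDigitSum hv)
  · rintro ⟨v, hv, rfl, hw⟩
    choose w hw using hw
    have hMw n : companion r ^ n *ᵥ intToReal (w n) = intToReal x - srsDigitSum r v n :=
      (inv_pow_mulVec_eq_iff hM n).1 (hw n).symm
    refine ⟨w, intToReal_injective (by simpa [srsDigitSum] using hMw 0),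
      srsTau_eq_of_pow_mulVec_eq hr0 hv hMw, ?_⟩
    simpa only [hMw] using tendsto_const_nhds.sub (hcontr.tendsto_srsDigitSum hv)
end
end
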